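/- Consider the IDM interval estimates: given counts n : X → ℕ on a finite set X with total N = ∑_x n(x), and a real S > 0, the interval for p(x) is [n(x)/(N+S), (n(x)+S)/(N+S)]. Each such interval has width S/(N+S), independent of x; consequently, if an attacker knows S and observes the intervals, then N is determined by N = S·(1−w)/w where w is the interval width, and the counts n(x) are determined by n(x) = lower(x)·(N+S). -/

import Mathlib

theorem add_div_sub_div_self {K : Type*} [DivisionRing K] (a b c : K) :
    (a + b) / c - a / c = b / c := by
  rw [← sub_div, add_sub_cancel_left]

theorem div_right_inj₀ {G₀ : Type*} [GroupWithZero G₀] {a b c : G₀} (ha : a ≠ 0) :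
    a / b = a / c ↔ b = c := by
  rw [div_eq_mul_inv, div_eq_mul_inv, mul_right_inj' ha, inv_inj]

theorem idm_identifiable_general {X : Type*} [Nonempty X]
    (S : ℝ) (hS : 0 < S)
    (n₁ n₂ : X → ℕ) (N₁ N₂ : ℕ) :
    (∀ x : X, ((n₁ x : ℝ) + S) / (N₁ + S) - (n₁ x : ℝ) / (N₁ + S) = S / (N₁ + S)) ∧
    ((∀ x : X, (n₁ x : ℝ) / (N₁ + S) = (n₂ x : ℝ) / (N₂ + S) ∧
        ((n₁ x : ℝ) + S) / (N₁ + S) = ((n₂ x : ℝ) + S) / (N₂ + S)) →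
      N₁ = N₂ ∧ n₁ = n₂) := by
  refine ⟨fun x ↦ add_div_sub_div_self _ _ _, fun h ↦ ?_⟩
  obtain ⟨x₀⟩ := ‹Nonempty X›
  have hwidth : S / ((N₁ : ℝ) + S) = S / ((N₂ : ℝ) + S) := by
    calc S / ((N₁ : ℝ) + S)
        = ((n₁ x₀ : ℝ) + S) / (N₁ + S) - (n₁ x₀ : ℝ) / (N₁ + S) :=
          (add_div_sub_div_self _ _ _).symm
      _ = ((n₂ x₀ : ℝ) + S) / (N₂ + S) - (n₂ x₀ : ℝ) / (N₂ + S) := by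
          rw [(h x₀).1, (h x₀).2]
      _ = S / ((N₂ : ℝ) + S) := add_div_sub_div_self _ _ _
  have hN : N₁ = N₂ := by
    exact_mod_cast add_right_cancel ((div_right_inj₀ hS.ne').1 hwidth)
  subst hN
  have hden : (N₁ : ℝ) + S ≠ 0 := by positivity
  exact ⟨rfl, funext fun x ↦ by exact_mod_cast (div_left_inj' hden).1 (h x).1⟩

/-- Lemma 3: the IDM intervals `[n x/(N+S), (n x + S)/(N+S)]` all
have width `S/(N+S)`, and if `S` is known, then the counts (and the sample size)
are identifiable from the intervals. -/
theorem idm_identifiable {X : Type*} [Fintype X] [Nonempty X]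
    (S : ℝ) (hS : 0 < S)
    (n₁ n₂ : X → ℕ) (N₁ N₂ : ℕ)
    (hN₁ : N₁ = ∑ x, n₁ x) (hN₂ : N₂ = ∑ x, n₂ x)
    (hN₁pos : 1 ≤ N₁) (hN₂pos : 1 ≤ N₂) :
    (∀ x : X, ((n₁ x : ℝ) + S) / (N₁ + S) - (n₁ x : ℝ) / (N₁ + S) = S / (N₁ + S)) ∧
    ((∀ x : X, (n₁ x : ℝ) / (N₁ + S) = (n₂ x : ℝ) / (N₂ + S) ∧
        ((n₁ x : ℝ) + S) / (N₁ + S) = ((n₂ x : ℝ) + S) / (N₂ + S)) →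
      N₁ = N₂ ∧ n₁ = n₂) :=
  idm_identifiable_general S hS n₁ n₂ N₁ N₂
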